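/- arXiv:2409.02733 — 4 statements merged into one kernel-verified Lean document; each statement's English description precedes it below -/
import Mathlib

section
/- Let G be a simple graph without universal vertices and let s be a simplicial vertex of G. Then s is a universal vertex of the auxiliary graph G^s. -/
/-- The closed neighborhood `N[v]` of a vertex. -/
def closedNbr {V : Type*} (G : SimpleGraph V) (v : V) : Set V := insert v (G.neighborSet v)

/-- A vertex is simplicial if its closed neighborhood is a clique. -/
def Simplicial {V : Type*} (G : SimpleGraph V) (s : V) : Prop := G.IsClique (closedNbr G s)

/-- A vertex is universal if it is adjacent to all other vertices. -/
def Universal {V : Type*} (G : SimpleGraph V) (v : V) : Prop := ∀ u, u ≠ v → G.Adj v u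

/-- The auxiliary graph `G^s` with respect to a simplicial vertex `s`. -/
def auxGraph {V : Type*} (G : SimpleGraph V) (s : V) : SimpleGraph V where
  Adj u v := u ≠ v ∧
    ((u ∉ closedNbr G s ∧ v ∉ closedNbr G s ∧ G.Adj u v) ∨
     (u ∈ closedNbr G s ∧ v ∈ closedNbr G s ∧ G.neighborSet u ∪ G.neighborSet v ≠ Set.univ) ∨
     (u ∈ closedNbr G s ∧ v ∉ closedNbr G s ∧ ¬ closedNbr G v ⊆ closedNbr G u) ∨
     (v ∈ closedNbr G s ∧ u ∉ closedNbr G s ∧ ¬ closedNbr G u ⊆ closedNbr G v))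
  symm := by
    constructor
    rintro u v ⟨hne, h⟩
    refine ⟨hne.symm, ?_⟩
    rcases h with ⟨h1, h2, h3⟩ | ⟨h1, h2, h3⟩ | h | h
    · exact Or.inl ⟨h2, h1, h3.symm⟩
    · exact Or.inr (Or.inl ⟨h2, h1, by rwa [Set.union_comm] at h3⟩)
    · exact Or.inr (Or.inr (Or.inr h))
    · exact Or.inr (Or.inr (Or.inl h))
  loopless := ⟨fun v h => h.1 rfl⟩

/-- A witness of an edge `uv` of `G^s`: a vertex `w ∉ N_G[s]` such that for each end `x`,
`w` is adjacent to `x` in `G` iff `x ∉ N_G[s]`. -/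
def EdgeWitness {V : Type*} (G : SimpleGraph V) (s u v w : V) : Prop :=
  w ∉ closedNbr G s ∧ (G.Adj w u ↔ u ∉ closedNbr G s) ∧ (G.Adj w v ↔ v ∉ closedNbr G s)

/-- An edge of `G^s` is collateral if it is an edge of `G` and one end is in `N_G[s]`. -/
def Collateral {V : Type*} (G : SimpleGraph V) (s u v : V) : Prop :=
  (auxGraph G s).Adj u v ∧ G.Adj u v ∧ (u ∈ closedNbr G s ∨ v ∈ closedNbr G s)

/-- A witness of a clique `K` of `G^s`: a vertex `w ∉ N_G[s]` such that `N_G[w] ∩ K` and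
`N_G[s] ∩ K` partition `K`. -/
def CliqueWitness {V : Type*} (G : SimpleGraph V) (s : V) (K : Set V) (w : V) : Prop :=
  w ∉ closedNbr G s ∧ ∀ x ∈ K, (x ∈ closedNbr G w ↔ x ∉ closedNbr G s)

/-- A graph is chordal if it has no induced cycle of length at least four. -/
def Chordal {V : Type*} (G : SimpleGraph V) : Prop :=
  ¬ ∃ (n : ℕ) (f : ZMod n → V), 4 ≤ n ∧ Function.Injective f ∧
      ∀ i j : ZMod n, G.Adj (f i) (f j) ↔ (j = i + 1 ∨ i = j + 1)

theorem self_mem_closedNbr {V : Type*} (G : SimpleGraph V) (v : V) : v ∈ closedNbr G v :=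
  Set.mem_insert v _

/-- Covering `V` by `N(s) ∪ N(u)` makes `u` universal, since `N[s]` is a clique containing `u`. -/
theorem Simplicial.neighborSet_union_ne_univ {V : Type*} {G : SimpleGraph V} {s u : V}
    (hs : Simplicial G s) (hu : u ∈ closedNbr G s) (hnu : ¬ Universal G u) :
    G.neighborSet s ∪ G.neighborSet u ≠ Set.univ := by
  intro hcover
  refine hnu fun x hxu => ?_
  rcases hcover.symm ▸ Set.mem_univ x with hxs | hxu'
  · exact hs hu (Set.mem_insert_of_mem s hxs) hxu.symm
  · exact hxu'

theorem auxGraph_adj_of_mem_closedNbr {V : Type*} {G : SimpleGraph V} {s u : V}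
    (hs : Simplicial G s) (hsu : s ≠ u) (hu : u ∈ closedNbr G s) (hnu : ¬ Universal G u) :
    (auxGraph G s).Adj s u :=
  ⟨hsu, Or.inr <| Or.inl ⟨self_mem_closedNbr G s, hu, hs.neighborSet_union_ne_univ hu hnu⟩⟩

theorem auxGraph_adj_of_not_mem_closedNbr {V : Type*} {G : SimpleGraph V} {s u : V}
    (hsu : s ≠ u) (hu : u ∉ closedNbr G s) : (auxGraph G s).Adj s u :=
  ⟨hsu, Or.inr <| Or.inr <| Or.inl
    ⟨self_mem_closedNbr G s, hu, fun hsub => hu (hsub (self_mem_closedNbr G u))⟩⟩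

theorem stmt_2_general {V : Type*} (G : SimpleGraph V) (s : V)
    (hno : ∀ v : V, ¬ Universal G v) (hs : Simplicial G s) :
    Universal (auxGraph G s) s := by
  intro u hus
  by_cases hu : u ∈ closedNbr G s
  · exact auxGraph_adj_of_mem_closedNbr hs hus.symm hu (hno u)
  · exact auxGraph_adj_of_not_mem_closedNbr hus.symm hu

/-- If G has no universal vertex and s is simplicial, then s is universal
in the auxiliary graph G^s. -/
theorem stmt_2 {V : Type*} [Fintype V] (G : SimpleGraph V) (s : V)
    (hno : ∀ v : V, ¬ Universal G v) (hs : Simplicial G s) :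
    Universal (auxGraph G s) s :=
  stmt_2_general G s hno hs
end

section
/- Let G be a chordal graph with simplicial vertex s, and let v₁ v₀ v₂ be an induced path of G^s such that both edges v₀v₁ and v₀v₂ are collateral and either both or neither of v₁, v₂ belong to N_G(s). If the edges v₀v₁ and v₀v₂ have a common witness, then v₁ and v₂ are adjacent in G. -/
/-!
If `v₁, v₂ ∈ N[s]` they are adjacent because `s` is simplicial. If exactly one of them lies in
`N[s]`, the parity hypothesis forces it to be `s` itself; then non-adjacency in `G^s` gives
`N[v] ⊆ N[s]` for the other end `v`, which the witness `w ∉ N[s]`, a neighbour of `v`,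
contradicts. If neither lies in `N[s]`, then `v₀ ∈ N[s]` and `v₁ v₀ v₂ w` is a 4-cycle of `G`
with `v₀w` a non-edge, so chordality supplies the chord `v₁v₂`.
-/

section

variable {V : Type*} {G : SimpleGraph V}

theorem Chordal.adj_of_cycle4 (hG : Chordal G) {a b c d : V}
    (hab : G.Adj a b) (hbc : G.Adj b c) (hcd : G.Adj c d) (hda : G.Adj d a)
    (hac : a ≠ c) (hbd : b ≠ d) (hnbd : ¬ G.Adj b d) : G.Adj a c := by
  by_contra hnac
  have hinj : Function.Injective ![a, b, c, d] := by
    intro i j hij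
    fin_cases i <;> fin_cases j <;>
      simp_all [hab.ne, hbc.ne, hcd.ne, hda.ne, hab.ne.symm, hbc.ne.symm, hcd.ne.symm,
        hda.ne.symm, hac.symm, hbd.symm]
  have hcycle : ∀ i j : Fin 4,
      G.Adj (![a, b, c, d] i) (![a, b, c, d] j) ↔ (j = i + 1 ∨ i = j + 1) := by
    intro i j
    fin_cases i <;> fin_cases j <;>
      simp [hab, hbc, hcd, hda, hab.symm, hbc.symm, hcd.symm, hda.symm, hnbd, hnac,
        mt G.adj_symm hnbd, mt G.adj_symm hnac]
  exact hG ⟨4, ![a, b, c, d], le_rfl, hinj, hcycle⟩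

theorem closedNbr_subset_of_not_auxGraph_adj {s u v : V} (hu : u ∈ closedNbr G s)
    (hv : v ∉ closedNbr G s) (huv : ¬ (auxGraph G s).Adj u v) :
    closedNbr G v ⊆ closedNbr G u := by
  by_contra hsub
  exact huv ⟨fun h => hv (h ▸ hu), Or.inr (Or.inr (Or.inl ⟨hu, hv, hsub⟩))⟩

theorem not_adj_of_not_auxGraph_adj_self {s v w : V} (hv : v ∉ closedNbr G s)
    (hsv : ¬ (auxGraph G s).Adj s v) (hw : w ∉ closedNbr G s) : ¬ G.Adj w v := fun hwv =>
  hw <| closedNbr_subset_of_not_auxGraph_adj (Set.mem_insert s _) hv hsv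
    (Set.mem_insert_of_mem v hwv.symm)

theorem eq_of_mem_closedNbr_of_notMem_closedNbr {s u v : V} (hu : u ∈ closedNbr G s)
    (hv : v ∉ closedNbr G s) (hpar : u ∈ G.neighborSet s ↔ v ∈ G.neighborSet s) : u = s :=
  (Set.eq_or_mem_of_mem_insert hu).resolve_right fun h =>
    hv (Set.mem_insert_of_mem s (hpar.mp h))

end

theorem stmt_6_general {V : Type*} (G : SimpleGraph V) (s v₀ v₁ v₂ : V)
    (hG : Chordal G) (hs : Simplicial G s)
    (h12 : v₁ ≠ v₂)
    (hind : ¬ (auxGraph G s).Adj v₁ v₂)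
    (hc1 : Collateral G s v₀ v₁) (hc2 : Collateral G s v₀ v₂)
    (hpar : v₁ ∈ G.neighborSet s ↔ v₂ ∈ G.neighborSet s)
    (w : V) (hw1 : EdgeWitness G s v₀ v₁ w) (hw2 : EdgeWitness G s v₀ v₂ w) :
    G.Adj v₁ v₂ := by
  by_cases h1 : v₁ ∈ closedNbr G s <;> by_cases h2 : v₂ ∈ closedNbr G s
  · exact hs h1 h2 h12
  · obtain rfl := eq_of_mem_closedNbr_of_notMem_closedNbr h1 h2 hpar
    exact absurd (hw2.2.2.mpr h2) (not_adj_of_not_auxGraph_adj_self h2 hind hw2.1)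
  · obtain rfl := eq_of_mem_closedNbr_of_notMem_closedNbr h2 h1 hpar.symm
    exact absurd (hw1.2.2.mpr h1)
      (not_adj_of_not_auxGraph_adj_self h1 (mt (·.symm) hind) hw1.1)
  · have hv₀ : v₀ ∈ closedNbr G s := hc1.2.2.resolve_right h1
    exact hG.adj_of_cycle4 hc1.2.1.symm hc2.2.1 (hw2.2.2.mpr h2).symm (hw1.2.2.mpr h1) h12
      (fun h => hw1.1 (h ▸ hv₀)) fun h => hw1.2.1.mp h.symm hv₀

/-- If v₁ v₀ v₂ is an induced path of G^s whose edges v₀v₁ and v₀v₂ are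
collateral, with either both or neither of v₁, v₂ in N_G(s), and the two edges have a
common witness, then v₁ and v₂ are adjacent in G. -/
theorem stmt_6 {V : Type*} [Fintype V] (G : SimpleGraph V) (s v₀ v₁ v₂ : V)
    (hG : Chordal G) (hs : Simplicial G s)
    (h12 : v₁ ≠ v₂)
    (ha1 : (auxGraph G s).Adj v₀ v₁) (ha2 : (auxGraph G s).Adj v₀ v₂)
    (hind : ¬ (auxGraph G s).Adj v₁ v₂)
    (hc1 : Collateral G s v₀ v₁) (hc2 : Collateral G s v₀ v₂)
    (hpar : v₁ ∈ G.neighborSet s ↔ v₂ ∈ G.neighborSet s)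
    (w : V) (hw1 : EdgeWitness G s v₀ v₁ w) (hw2 : EdgeWitness G s v₀ v₂ w) :
    G.Adj v₁ v₂ :=
  stmt_6_general G s v₀ v₁ v₂ hG hs h12 hind hc1 hc2 hpar w hw1 hw2
end

section
/- Let G be a graph without universal vertices, s a simplicial vertex of G, and K a clique of G^s contained in N_G(s). If K has no witness, then every inclusion-minimal unwitnessed subset K′ of K has at least three vertices. -/
section Witness

variable {V : Type*} {G : SimpleGraph V} {s a b w : V} {K : Set V}

theorem mem_closedNbr {x y : V} : x ∈ closedNbr G y ↔ x = y ∨ G.Adj y x := Iff.rfl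

theorem neighborSet_subset_closedNbr (v : V) : G.neighborSet v ⊆ closedNbr G v :=
  Set.subset_insert _ _

theorem exists_ne_not_adj_of_not_universal (h : ¬ Universal G a) : ∃ u, u ≠ a ∧ ¬ G.Adj a u := by
  simpa [Universal] using h

theorem not_mem_closedNbr_of_not_adj (hs : Simplicial G s) (ha : a ∈ closedNbr G s)
    (hwa : w ≠ a) (hadj : ¬ G.Adj w a) : w ∉ closedNbr G s :=
  fun hw => hadj (hs hw ha hwa)

theorem cliqueWitness_of_forall_not_adj (hs : Simplicial G s) (hKs : K ⊆ closedNbr G s)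
    (ha : a ∈ K) (hwa : w ≠ a) (hw : ∀ x ∈ K, ¬ G.Adj w x) : CliqueWitness G s K w := by
  have hws : w ∉ closedNbr G s := not_mem_closedNbr_of_not_adj hs (hKs ha) hwa (hw a ha)
  refine ⟨hws, fun x hx => ⟨fun hxw => ?_, fun hxs => absurd (hKs hx) hxs⟩⟩
  rcases mem_closedNbr.1 hxw with rfl | hadj
  · exact absurd (hKs hx) hws
  · exact absurd hadj (hw x hx)

theorem exists_cliqueWitness_empty (hs : ¬ Universal G s) : ∃ w, CliqueWitness G s ∅ w := by
  obtain ⟨u, hus, hsu⟩ := exists_ne_not_adj_of_not_universal hs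
  refine ⟨u, ?_, fun x hx => absurd hx (Set.notMem_empty x)⟩
  rintro (rfl | hadj)
  exacts [hus rfl, hsu hadj]

theorem exists_cliqueWitness_singleton (hs : Simplicial G s) (ha : a ∈ closedNbr G s)
    (hna : ¬ Universal G a) : ∃ w, CliqueWitness G s {a} w := by
  obtain ⟨u, hua, hau⟩ := exists_ne_not_adj_of_not_universal hna
  refine ⟨u, cliqueWitness_of_forall_not_adj hs (Set.singleton_subset_iff.2 ha) rfl hua ?_⟩
  rintro x rfl hux
  exact hau hux.symm

theorem neighborSet_union_ne_univ_of_auxGraph_adj (ha : a ∈ closedNbr G s)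
    (hb : b ∈ closedNbr G s) (h : (auxGraph G s).Adj a b) :
    G.neighborSet a ∪ G.neighborSet b ≠ Set.univ := by
  rcases h.2 with ⟨ha', -⟩ | ⟨-, -, h⟩ | ⟨-, hb', -⟩ | ⟨-, ha', -⟩
  exacts [absurd ha ha', h, absurd hb hb', absurd ha ha']

theorem exists_cliqueWitness_pair (hs : Simplicial G s) (ha : a ∈ closedNbr G s)
    (hb : b ∈ closedNbr G s) (h : (auxGraph G s).Adj a b) : ∃ w, CliqueWitness G s {a, b} w := by
  obtain ⟨w, hw⟩ := (Set.ne_univ_iff_exists_notMem _).1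
    (neighborSet_union_ne_univ_of_auxGraph_adj ha hb h)
  simp only [Set.mem_union, SimpleGraph.mem_neighborSet, not_or] at hw
  have hsub : {a, b} ⊆ closedNbr G s := Set.insert_subset ha (Set.singleton_subset_iff.2 hb)
  have hnadj : ∀ x ∈ ({a, b} : Set V), ¬ G.Adj w x := by
    rintro x (rfl | rfl) hwx
    exacts [hw.1 hwx.symm, hw.2 hwx.symm]
  refine ⟨w, ?_⟩
  by_cases hwa : w = a
  · exact cliqueWitness_of_forall_not_adj hs hsub (Set.mem_insert_of_mem a rfl)
      (hwa ▸ h.ne) hnadj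
  · exact cliqueWitness_of_forall_not_adj hs hsub (Set.mem_insert a {b}) hwa hnadj

theorem exists_cliqueWitness_of_ncard_lt_three (hno : ∀ v : V, ¬ Universal G v)
    (hs : Simplicial G s) (hK : (auxGraph G s).IsClique K) (hKs : K ⊆ closedNbr G s)
    (hfin : K.Finite) (hcard : K.ncard < 3) : ∃ w, CliqueWitness G s K w := by
  interval_cases h : K.ncard
  · rw [(Set.ncard_eq_zero hfin).1 h]
    exact exists_cliqueWitness_empty (hno s)
  · obtain ⟨a, rfl⟩ := Set.ncard_eq_one.1 h
    exact exists_cliqueWitness_singleton hs (hKs rfl) (hno a)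
  · obtain ⟨a, b, hab, rfl⟩ := Set.ncard_eq_two.1 h
    have ha : a ∈ ({a, b} : Set V) := Set.mem_insert a {b}
    have hb : b ∈ ({a, b} : Set V) := Set.mem_insert_of_mem a rfl
    exact exists_cliqueWitness_pair hs (hKs ha) (hKs hb) (hK ha hb hab)

end Witness

theorem stmt_8_general {V : Type*} [Fintype V] (G : SimpleGraph V) (s : V) (K : Set V)
    (hno : ∀ v : V, ¬ Universal G v) (hs : Simplicial G s)
    (hK : (auxGraph G s).IsClique K) (hKs : K ⊆ G.neighborSet s) :
    ∀ K' : Set V, K' ⊆ K → (¬ ∃ w : V, CliqueWitness G s K' w) →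
      (∀ K'' : Set V, K'' ⊆ K' → K'' ≠ K' → ∃ w : V, CliqueWitness G s K'' w) →
      3 ≤ K'.ncard := by
  intro K' hK'K hK'nw _
  by_contra hlt
  exact hK'nw <| exists_cliqueWitness_of_ncard_lt_three hno hs (hK.subset hK'K)
    (hK'K.trans (hKs.trans (neighborSet_subset_closedNbr s))) K'.toFinite (not_le.1 hlt)

/-- If G has no universal vertex, s is simplicial, and K is an unwitnessed
clique of G^s contained in N_G(s), then every inclusion-minimal unwitnessed subset of K
has at least three vertices. -/
theorem stmt_8 {V : Type*} [Fintype V] (G : SimpleGraph V) (s : V) (K : Set V)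
    (hno : ∀ v : V, ¬ Universal G v) (hs : Simplicial G s)
    (hK : (auxGraph G s).IsClique K) (hKs : K ⊆ G.neighborSet s)
    (hKnw : ¬ ∃ w : V, CliqueWitness G s K w) :
    ∀ K' : Set V, K' ⊆ K → (¬ ∃ w : V, CliqueWitness G s K' w) →
      (∀ K'' : Set V, K'' ⊆ K' → K'' ≠ K' → ∃ w : V, CliqueWitness G s K'' w) →
      3 ≤ K'.ncard :=
  stmt_8_general G s K hno hs hK hKs
end

section
/- For every p ≥ 1 and every sequence (a₀, a₁, …, a_{2p−1}) of positive integers, the graph ⊗(a₀, a₁, …, a_{2p−1}) is chordal. -/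
/-- Even indices among the 2p blocks (the gadget blocks). -/
abbrev EvenIdx (p : ℕ) : Type := {i : Fin (2 * p) // i.val % 2 = 0}

/-- The vertex set of ⊗(a₀, …, a_{2p−1}): a special vertex `c`, for every block `i` the
vertices `v i j` (j < a i; clique vertices of a gadget if `i` is even, path vertices if
`i` is odd), and for every even block `i` the independent vertices `w i j` (j ≤ a i). -/
abbrev OVert (p : ℕ) (a : Fin (2 * p) → ℕ) : Type :=
  Unit ⊕ (Σ i : Fin (2 * p), Fin (a i)) ⊕ (Σ i : EvenIdx p, Fin (a i.1 + 1))

def cVert (p : ℕ) (a : Fin (2 * p) → ℕ) : OVert p a := Sum.inl ()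

def vVert (p : ℕ) (a : Fin (2 * p) → ℕ) (i : Fin (2 * p)) (j : Fin (a i)) : OVert p a :=
  Sum.inr (Sum.inl ⟨i, j⟩)

def wVert (p : ℕ) (a : Fin (2 * p) → ℕ) (i : EvenIdx p) (j : Fin (a i.1 + 1)) :
    OVert p a :=
  Sum.inr (Sum.inr ⟨i, j⟩)

/-- The block a vertex belongs to (`none` for `c`). -/
def blk {p : ℕ} {a : Fin (2 * p) → ℕ} : OVert p a → Option (Fin (2 * p))
  | Sum.inl _ => none
  | Sum.inr (Sum.inl x) => some x.1
  | Sum.inr (Sum.inr x) => some x.1.1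

/-- The clique vertices of the gadgets. -/
def IsCliqueVert (p : ℕ) (a : Fin (2 * p) → ℕ) (x : OVert p a) : Prop :=
  ∃ (i : Fin (2 * p)) (j : Fin (a i)), i.val % 2 = 0 ∧ x = vVert p a i j

/-- Cyclic successor. -/
def nxt {n : ℕ} (i : Fin n) : Fin n :=
  ⟨(i.val + 1) % n, Nat.mod_lt _ (Nat.lt_of_le_of_lt (Nat.zero_le _) i.isLt)⟩

/-- The base relation generating the edges of ⊗(a₀, …, a_{2p−1}):
clique vertices of a gadget are adjacent to everything outside their block and complete
to each other; inside a gadget, `w i j'` is adjacent to the clique vertices except the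
two excluded ones; odd blocks are paths; the right end of each block is joined to the
left end of the (cyclically) next block. -/
def oRel (p : ℕ) (a : Fin (2 * p) → ℕ) : OVert p a → OVert p a → Prop := fun x y =>
  (IsCliqueVert p a x ∧ blk x ≠ blk y) ∨
  (∃ (i : Fin (2 * p)) (j j' : Fin (a i)), i.val % 2 = 0 ∧ j ≠ j' ∧
    x = vVert p a i j ∧ y = vVert p a i j') ∨
  (∃ (i : EvenIdx p) (j : Fin (a i.1)) (j' : Fin (a i.1 + 1)),
    j'.val ≠ j.val ∧ j'.val ≠ j.val + 1 ∧ x = vVert p a i.1 j ∧ y = wVert p a i j') ∨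
  (∃ (i : Fin (2 * p)) (j j' : Fin (a i)), i.val % 2 = 1 ∧ j'.val = j.val + 1 ∧
    x = vVert p a i j ∧ y = vVert p a i j') ∨
  (∃ (i : Fin (2 * p)) (j : Fin (a i)) (i' : EvenIdx p) (j' : Fin (a i'.1 + 1)),
    i.val % 2 = 1 ∧ j.val + 1 = a i ∧ i'.1 = nxt i ∧ j'.val = 0 ∧
    x = vVert p a i j ∧ y = wVert p a i' j') ∨
  (∃ (i : EvenIdx p) (j : Fin (a i.1 + 1)) (i' : Fin (2 * p)) (j' : Fin (a i')),
    j.val = a i.1 ∧ i' = nxt i.1 ∧ j'.val = 0 ∧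
    x = wVert p a i j ∧ y = vVert p a i' j')

/-- The graph ⊗(a₀, a₁, …, a_{2p−1}). -/
def otimes (p : ℕ) (a : Fin (2 * p) → ℕ) : SimpleGraph (OVert p a) :=
  SimpleGraph.fromRel (oRel p a)

section Aux
variable {p : ℕ} {a : Fin (2 * p) → ℕ}

def Jval : OVert p a → ℕ
  | Sum.inl _ => 0
  | Sum.inr (Sum.inl x) => x.2.val
  | Sum.inr (Sum.inr x) => x.2.val

lemma vVert_inj {i i' : Fin (2 * p)} {j : Fin (a i)} {j' : Fin (a i')}
    (h : vVert p a i j = vVert p a i' j') : i = i' ∧ j.val = j'.val := by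
  have h1 : some i = some i' := congrArg blk h
  exact ⟨Option.some_injective _ h1, congrArg Jval h⟩

lemma wVert_inj {i i' : EvenIdx p} {j : Fin (a i.1 + 1)} {j' : Fin (a i'.1 + 1)}
    (h : wVert p a i j = wVert p a i' j') : i = i' ∧ j.val = j'.val := by
  have h1 : some i.1 = some i'.1 := congrArg blk h
  exact ⟨Subtype.ext (Option.some_injective _ h1), congrArg Jval h⟩

lemma vVert_ne_wVert {i : Fin (2 * p)} {j : Fin (a i)} {i' : EvenIdx p}
    {j' : Fin (a i'.1 + 1)} : vVert p a i j ≠ wVert p a i' j' := by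
  simp [vVert, wVert]

lemma cVert_ne_vVert {i : Fin (2 * p)} {j : Fin (a i)} : cVert p a ≠ vVert p a i j := by
  simp [cVert, vVert]

lemma cVert_ne_wVert {i : EvenIdx p} {j : Fin (a i.1 + 1)} : cVert p a ≠ wVert p a i j := by
  simp [cVert, wVert]

lemma nxt_inj {n : ℕ} : Function.Injective (nxt (n := n)) := by
  intro x y h
  have hx := x.isLt
  have hy := y.isLt
  have h' : (x.val + 1) % n = (y.val + 1) % n := congrArg Fin.val h
  have e1 : (x.val + 1) % n = if x.val + 1 = n then 0 else x.val + 1 := by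
    split
    · simp_all
    · exact Nat.mod_eq_of_lt (by omega)
  have e2 : (y.val + 1) % n = if y.val + 1 = n then 0 else y.val + 1 := by
    split
    · simp_all
    · exact Nat.mod_eq_of_lt (by omega)
  rw [e1, e2] at h'
  apply Fin.ext
  split at h' <;> split at h' <;> omega

lemma nxt_parity {i : Fin (2 * p)} (hi : i.val % 2 = 0) :
    (nxt i).val % 2 = 1 := by
  have hx := i.isLt
  have : (i.val + 1) % (2 * p) = i.val + 1 := Nat.mod_eq_of_lt (by omega)
  show (i.val + 1) % (2 * p) % 2 = 1
  rw [this]; omega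

/-- distinct clique vertices are adjacent -/
lemma clique_adj {x y : OVert p a} (hx : IsCliqueVert p a x) (hy : IsCliqueVert p a y)
    (hne : x ≠ y) : (otimes p a).Adj x y := by
  obtain ⟨i, j, hi, rfl⟩ := hx
  obtain ⟨i', j', hi', rfl⟩ := hy
  rw [otimes, SimpleGraph.fromRel_adj]
  refine ⟨hne, Or.inl ?_⟩
  by_cases hii : i = i'
  · subst hii
    refine Or.inr (Or.inl ⟨i, j, j', hi, ?_, rfl, rfl⟩)
    intro h; exact hne (by rw [h])
  · exact Or.inl ⟨⟨i, j, hi, rfl⟩, by simpa [blk, vVert] using hii⟩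

/-- neighbors of c are clique vertices -/
lemma adj_c {u : OVert p a} (h : (otimes p a).Adj (cVert p a) u) : IsCliqueVert p a u := by
  rw [otimes, SimpleGraph.fromRel_adj] at h
  obtain ⟨hne, h | h⟩ := h
  · rcases h with ⟨⟨i, j, hi, hc⟩, -⟩ | ⟨i, j, j', _, _, hc, -⟩ |
      ⟨i, j, j', _, _, hc, -⟩ | ⟨i, j, j', _, _, hc, -⟩ |
      ⟨i, j, i', j', _, _, _, _, hc, -⟩ | ⟨i, j, i', j', _, _, _, hc, -⟩
    · exact absurd hc cVert_ne_vVert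
    · exact absurd hc cVert_ne_vVert
    · exact absurd hc cVert_ne_vVert
    · exact absurd hc cVert_ne_vVert
    · exact absurd hc cVert_ne_vVert
    · exact absurd hc cVert_ne_wVert
  · rcases h with ⟨hu, -⟩ | ⟨i, j, j', _, _, -, hc⟩ |
      ⟨i, j, j', _, _, -, hc⟩ | ⟨i, j, j', _, _, -, hc⟩ |
      ⟨i, j, i', j', _, _, _, _, -, hc⟩ | ⟨i, j, i', j', _, _, _, -, hc⟩
    · exact hu
    · exact absurd hc cVert_ne_vVert
    · exact absurd hc cVert_ne_wVert
    · exact absurd hc cVert_ne_vVert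
    · exact absurd hc cVert_ne_wVert
    · exact absurd hc cVert_ne_vVert

/-- a clique vertex is adjacent to everything except (itself and) w-vertices -/
lemma adj_vEven {i : Fin (2 * p)} {j : Fin (a i)} (hi : i.val % 2 = 0) {y : OVert p a}
    (hne : vVert p a i j ≠ y) (hw : ∀ (i' : EvenIdx p) (k : Fin (a i'.1 + 1)), y ≠ wVert p a i' k) :
    (otimes p a).Adj (vVert p a i j) y := by
  rw [otimes, SimpleGraph.fromRel_adj]
  refine ⟨hne, Or.inl ?_⟩
  match y with
  | Sum.inl u =>
    exact Or.inl ⟨⟨i, j, hi, rfl⟩, by simp [blk, vVert]⟩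
  | Sum.inr (Sum.inl ⟨i', j'⟩) =>
    by_cases hii : i = i'
    · subst hii
      refine Or.inr (Or.inl ⟨i, j, j', hi, ?_, rfl, rfl⟩)
      intro h; exact hne (by rw [h]; rfl)
    · exact Or.inl ⟨⟨i, j, hi, rfl⟩, by simpa [blk, vVert] using hii⟩
  | Sum.inr (Sum.inr ⟨i', j'⟩) =>
    exact absurd rfl (hw i' j')


lemma clique_adj_diffblk {i m : Fin (2 * p)} {j : Fin (a i)} {jm : Fin (a m)}
    (hi : i.val % 2 = 0) (hne : i ≠ m) :
    (otimes p a).Adj (vVert p a i j) (vVert p a m jm) := by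
  rw [otimes, SimpleGraph.fromRel_adj]
  refine ⟨fun h => hne (vVert_inj h).1, Or.inl (Or.inl ⟨⟨i, j, hi, rfl⟩, ?_⟩)⟩
  show some i ≠ some m
  simpa using hne

lemma adj_w_classify {i : EvenIdx p} {k : Fin (a i.1 + 1)} {u : OVert p a}
    (h : (otimes p a).Adj (wVert p a i k) u) :
    IsCliqueVert p a u ∨
    (∃ (m : Fin (2 * p)) (j : Fin (a m)), m.val % 2 = 1 ∧ j.val + 1 = a m ∧
      i.1 = nxt m ∧ k.val = 0 ∧ u = vVert p a m j) ∨
    (∃ (j : Fin (a (nxt i.1))), k.val = a i.1 ∧ j.val = 0 ∧ u = vVert p a (nxt i.1) j) := by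
  rw [otimes, SimpleGraph.fromRel_adj] at h
  obtain ⟨hne, h | h⟩ := h
  · rcases h with ⟨⟨i0, j0, hi0, hx⟩, -⟩ | ⟨i0, j0, j0', _, _, hx, -⟩ |
      ⟨i0, j0, j0', _, _, hx, -⟩ | ⟨i0, j0, j0', _, _, hx, -⟩ |
      ⟨i0, j0, i0', j0', _, _, _, _, hx, -⟩ | ⟨i0, j0, i0', j0', hj0, hi0', hj0', hx, hy⟩
    · exact absurd hx.symm vVert_ne_wVert
    · exact absurd hx.symm vVert_ne_wVert
    · exact absurd hx.symm vVert_ne_wVert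
    · exact absurd hx.symm vVert_ne_wVert
    · exact absurd hx.symm vVert_ne_wVert
    · -- clause 6 : u = vVert (nxt i) j'
      obtain ⟨hii, hkk⟩ := wVert_inj hx
      subst hii
      subst hi0'
      exact Or.inr (Or.inr ⟨j0', by omega, hj0', hy⟩)
  · rcases h with ⟨hu, -⟩ | ⟨i0, j0, j0', _, _, -, hy⟩ |
      ⟨i0, j0, j0', _, _, hx, -⟩ | ⟨i0, j0, j0', _, _, -, hy⟩ |
      ⟨i0, j0, i0', j0', hodd, hj0, hi0', hj0', hx, hy⟩ | ⟨i0, j0, i0', j0', _, _, _, -, hy⟩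
    · exact Or.inl hu
    · exact absurd hy.symm vVert_ne_wVert
    · -- clause 3 : u = vVert i0.1 j0 is a clique vertex
      exact Or.inl ⟨i0.1, j0, i0.2, hx⟩
    · exact absurd hy.symm vVert_ne_wVert
    · -- clause 5 : u = vVert m j, path end
      obtain ⟨hii, hkk⟩ := wVert_inj hy
      subst hii
      exact Or.inr (Or.inl ⟨i0, j0, hodd, hj0, hi0', by omega, hx⟩)
    · exact absurd hy.symm vVert_ne_wVert

/-- any two distinct neighbors of a w-vertex are adjacent -/
lemma w_nbrs_adj (ha : ∀ i, 0 < a i) {i : EvenIdx p} {k : Fin (a i.1 + 1)}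
    {u u' : OVert p a} (h : (otimes p a).Adj (wVert p a i k) u)
    (h' : (otimes p a).Adj (wVert p a i k) u') (hne : u ≠ u') :
    (otimes p a).Adj u u' := by
  have hparu : ∀ (m : Fin (2 * p)), m.val % 2 = 1 → ∀ (jm : Fin (a m)) (x : OVert p a),
      IsCliqueVert p a x → (otimes p a).Adj x (vVert p a m jm) := by
    rintro m hm jm x ⟨i2, j2, hi2, rfl⟩
    exact clique_adj_diffblk hi2 (fun e => by subst e; omega)
  rcases adj_w_classify h with hc | ⟨m, j, hm, hja, hnx, hk0, rfl⟩ | ⟨j, hka, hj0, rfl⟩ <;>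
    rcases adj_w_classify h' with hc' | ⟨m', j', hm', hja', hnx', hk0', rfl⟩ | ⟨j', hka', hj0', rfl⟩
  · exact clique_adj hc hc' hne
  · exact hparu m' hm' j' u hc
  · exact hparu (nxt i.1) (nxt_parity i.2) j' u hc
  · exact ((hparu m hm j u' hc').symm)
  · -- both left-end path neighbors: equal, contradiction
    obtain rfl : m = m' := nxt_inj (hnx.symm.trans hnx')
    exact absurd (congrArg (vVert p a m) (Fin.ext (by omega))) hne
  · -- k = 0 and k = a i : impossible
    exact absurd hka' (by have := ha i.1; omega)
  · exact ((hparu (nxt i.1) (nxt_parity i.2) j u' hc').symm)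
  · exact absurd hka (by have := ha i.1; omega)
  · exact absurd (congrArg (vVert p a (nxt i.1)) (Fin.ext (by omega))) hne

lemma adj_odd_odd {m m' : Fin (2 * p)} {j : Fin (a m)} {j' : Fin (a m')}
    (hm : m.val % 2 = 1) (hm' : m'.val % 2 = 1)
    (h : (otimes p a).Adj (vVert p a m j) (vVert p a m' j')) :
    m = m' ∧ (j'.val = j.val + 1 ∨ j.val = j'.val + 1) := by
  rw [otimes, SimpleGraph.fromRel_adj] at h
  obtain ⟨hne, h | h⟩ := h
  · rcases h with ⟨⟨i0, j0, hi0, hx⟩, -⟩ | ⟨i0, j0, j0', hi0, _, hx, -⟩ |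
      ⟨i0, j0, j0', _, _, _, hy⟩ | ⟨i0, j0, j0', hodd, hjj, hx, hy⟩ |
      ⟨i0, j0, i0', j0', _, _, _, _, _, hy⟩ | ⟨i0, j0, i0', j0', _, _, _, hx, -⟩
    · obtain ⟨rfl, -⟩ := vVert_inj hx; omega
    · obtain ⟨rfl, -⟩ := vVert_inj hx; omega
    · exact absurd hy vVert_ne_wVert
    · obtain ⟨rfl, e1⟩ := vVert_inj hx
      obtain ⟨rfl, e2⟩ := vVert_inj hy
      exact ⟨rfl, Or.inl (by omega)⟩
    · exact absurd hy vVert_ne_wVert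
    · exact absurd hx vVert_ne_wVert
  · rcases h with ⟨⟨i0, j0, hi0, hx⟩, -⟩ | ⟨i0, j0, j0', hi0, _, hx, -⟩ |
      ⟨i0, j0, j0', _, _, _, hy⟩ | ⟨i0, j0, j0', hodd, hjj, hx, hy⟩ |
      ⟨i0, j0, i0', j0', _, _, _, _, _, hy⟩ | ⟨i0, j0, i0', j0', _, _, _, hx, -⟩
    · obtain ⟨rfl, -⟩ := vVert_inj hx; omega
    · obtain ⟨rfl, -⟩ := vVert_inj hx; omega
    · exact absurd hy vVert_ne_wVert
    · obtain ⟨rfl, e1⟩ := vVert_inj hx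
      obtain ⟨rfl, e2⟩ := vVert_inj hy
      exact ⟨rfl, Or.inr (by omega)⟩
    · exact absurd hy vVert_ne_wVert
    · exact absurd hx vVert_ne_wVert

end Aux

/-- For every p ≥ 1 and positive integers a₀, …, a_{2p−1}, the graph
⊗(a₀, …, a_{2p−1}) is chordal. -/
theorem stmt_14 (p : ℕ) (a : Fin (2 * p) → ℕ) (hp : 1 ≤ p) (ha : ∀ i, 0 < a i) :
    Chordal (otimes p a) := by
  rintro ⟨n, f, hn, hinj, hadj⟩
  haveI : NeZero n := ⟨by omega⟩
  have hdvd : ∀ k : ℕ, (k : ZMod n) = 0 → n ∣ k := fun k hk =>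
    (CharP.cast_eq_zero_iff (ZMod n) n k).1 hk
  have h1 : (1 : ZMod n) ≠ 0 := fun h => by
    have := Nat.le_of_dvd (by norm_num) (hdvd 1 (by exact_mod_cast h)); omega
  have h2 : (2 : ZMod n) ≠ 0 := fun h => by
    have := Nat.le_of_dvd (by norm_num) (hdvd 2 (by exact_mod_cast h)); omega
  have h3 : (3 : ZMod n) ≠ 0 := fun h => by
    have := Nat.le_of_dvd (by norm_num) (hdvd 3 (by exact_mod_cast h)); omega
  have hA : ∀ t, (otimes p a).Adj (f t) (f (t + 1)) := fun t => (hadj t (t + 1)).2 (Or.inl rfl)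
  have hA' : ∀ t, (otimes p a).Adj (f t) (f (t - 1)) := fun t =>
    (hadj t (t - 1)).2 (Or.inr (by ring))
  have hne2 : ∀ t : ZMod n, f (t + 1) ≠ f (t - 1) := by
    intro t h
    have := hinj h
    apply h2
    linear_combination this
  have hnadj2 : ∀ t : ZMod n, ¬ (otimes p a).Adj (f (t + 1)) (f (t - 1)) := by
    intro t h
    rcases (hadj _ _).1 h with h' | h'
    · apply h3; linear_combination -h'
    · apply h1; linear_combination h'
  -- no w-vertex lies on the cycle
  have hwfree : ∀ (t : ZMod n) (i : EvenIdx p) (k : Fin (a i.1 + 1)),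
      f t ≠ wVert p a i k := by
    intro t i k h
    apply hnadj2 t
    have g1 := hA t; rw [h] at g1
    have g2 := hA' t; rw [h] at g2
    exact w_nbrs_adj ha g1 g2 (hne2 t)
  -- c does not lie on the cycle
  have hcfree : ∀ t : ZMod n, f t ≠ cVert p a := by
    intro t h
    apply hnadj2 t
    have g1 := hA t; rw [h] at g1
    have g2 := hA' t; rw [h] at g2
    exact clique_adj (adj_c g1) (adj_c g2) (hne2 t)
  -- no clique vertex lies on the cycle
  have hclfree : ∀ t : ZMod n, ¬ IsCliqueVert p a (f t) := by
    rintro t ⟨i, j, hi, h⟩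
    have hneq : f t ≠ f (t + 2) := by
      intro e; have := hinj e; apply h2; linear_combination -this
    have hnadj : ¬ (otimes p a).Adj (f t) (f (t + 2)) := by
      intro had
      rcases (hadj _ _).1 had with h' | h'
      · apply h1; linear_combination h'
      · apply h3; linear_combination -h'
    apply hnadj
    rw [h]
    refine adj_vEven hi (by rw [← h]; exact hneq) (fun i' k e => hwfree (t + 2) i' k e)
  -- so every cycle vertex is a path vertex in an odd block
  have hform : ∀ t : ZMod n, ∃ (m : Fin (2 * p)) (j : Fin (a m)),
      m.val % 2 = 1 ∧ f t = vVert p a m j := by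
    intro t
    rcases hft : f t with u | (⟨m, j⟩ | ⟨i, k⟩)
    · rcases u with ⟨⟩
      exact absurd hft (hcfree t)
    · refine ⟨m, j, ?_, rfl⟩
      rcases Nat.mod_two_eq_zero_or_one m.val with hm | hm
      · exfalso
        apply hclfree t
        exact ⟨m, j, hm, hft⟩
      · exact hm
    · exact absurd hft (hwfree t i k)
  -- take the vertex with maximal path-coordinate
  haveI : Nonempty (ZMod n) := ⟨0⟩
  obtain ⟨t0, ht0⟩ := Finite.exists_max (fun t : ZMod n => Jval (f t))
  obtain ⟨m, j, hm, he⟩ := hform t0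
  obtain ⟨m1, j1, hm1, he1⟩ := hform (t0 + 1)
  obtain ⟨m2, j2, hm2, he2⟩ := hform (t0 - 1)
  have g1 := hA t0; rw [he, he1] at g1
  have g2 := hA' t0; rw [he, he2] at g2
  obtain ⟨e1, d1⟩ := adj_odd_odd hm hm1 g1
  obtain ⟨e2, d2⟩ := adj_odd_odd hm hm2 g2
  have mx1 : Jval (f (t0 + 1)) ≤ Jval (f t0) := ht0 _
  have mx2 : Jval (f (t0 - 1)) ≤ Jval (f t0) := ht0 _
  rw [he, he1] at mx1
  rw [he, he2] at mx2
  have mx1' : j1.val ≤ j.val := mx1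
  have mx2' : j2.val ≤ j.val := mx2
  apply hne2 t0
  rw [he1, he2]
  subst e1
  subst e2
  exact congrArg (vVert p a m) (Fin.ext (by omega))
end
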